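/- Let b > -1 and c > 0. Then there exists a constant C such that for all x, y in the unit ball of R^n, ∫_0^1 (1-τ)^b / [τx, y]^{1+b+c} dτ ≤ C / [x,y]^c. -/

import Mathlib

/-!
Since `[τx, y]` dominates both `1 - τ` and `τ [x, y]`, and `[x, y] ≤ 2`, we get
`1 - τ + [x, y] ≤ 4 [τx, y]`. After the substitution `u = 1 - τ` the integral is therefore at most
`4^(1+b+c) ∫_0^∞ u^b (u + r)^(-(1+b+c)) du` with `r = [x, y]`; splitting at `u = r` and bounding
`u + r` below by `r`, resp. by `u`, this is at most `4^(1+b+c) (1/(b+1) + 1/c) r^(-c)`.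
-/

open Metric MeasureTheory RealInnerProductSpace

/-- The bracket `[x,y] = sqrt(1 - 2 x·y + |x|²|y|²)`. -/
noncomputable def bracket {n : ℕ} (x y : EuclideanSpace ℝ (Fin n)) : ℝ :=
  Real.sqrt (1 - 2 * ⟪x, y⟫ + ‖x‖ ^ 2 * ‖y‖ ^ 2)

open Set

section Bracket

variable {n : ℕ} {x y : EuclideanSpace ℝ (Fin n)} {τ : ℝ}

lemma sq_bracket (x y : EuclideanSpace ℝ (Fin n)) :
    bracket x y ^ 2 = 1 - 2 * ⟪x, y⟫ + ‖x‖ ^ 2 * ‖y‖ ^ 2 := by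
  refine Real.sq_sqrt ?_
  nlinarith [real_inner_le_norm x y, sq_nonneg (1 - ‖x‖ * ‖y‖)]

lemma sq_bracket_smul_left (τ : ℝ) (x y : EuclideanSpace ℝ (Fin n)) :
    bracket (τ • x) y ^ 2 = 1 - 2 * τ * ⟪x, y⟫ + τ ^ 2 * ‖x‖ ^ 2 * ‖y‖ ^ 2 := by
  rw [sq_bracket, real_inner_smul_left, norm_smul, mul_pow, Real.norm_eq_abs, sq_abs]
  ring

lemma bracket_nonneg (x y : EuclideanSpace ℝ (Fin n)) : 0 ≤ bracket x y :=
  Real.sqrt_nonneg _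

lemma bracket_pos (hxy : ‖x‖ * ‖y‖ < 1) : 0 < bracket x y :=
  Real.sqrt_pos.mpr <| by
    nlinarith [real_inner_le_norm x y, pow_pos (sub_pos.mpr hxy) 2]

lemma bracket_le_two (hxy : ‖x‖ * ‖y‖ ≤ 1) : bracket x y ≤ 2 := by
  have hinner : -⟪x, y⟫ ≤ ‖x‖ * ‖y‖ := neg_le.mp (abs_le.mp (abs_real_inner_le_norm x y)).1
  refine (pow_le_pow_iff_left₀ (bracket_nonneg x y) zero_le_two two_ne_zero).1 ?_
  rw [sq_bracket]
  nlinarith [mul_nonneg (norm_nonneg x) (norm_nonneg y)]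

lemma one_sub_le_bracket_smul_left (hxy : ‖x‖ * ‖y‖ ≤ 1) (hτ₀ : 0 ≤ τ) (hτ₁ : τ ≤ 1) :
    1 - τ ≤ bracket (τ • x) y := by
  refine (pow_le_pow_iff_left₀ (sub_nonneg.mpr hτ₁) (bracket_nonneg _ _) two_ne_zero).1 ?_
  have hsq : (‖x‖ * ‖y‖) ^ 2 ≤ 1 := pow_le_one₀ (by positivity) hxy
  rw [sq_bracket_smul_left]
  nlinarith [mul_nonneg hτ₀ (sq_bracket x y ▸ sq_nonneg (bracket x y)),
    mul_nonneg (mul_nonneg hτ₀ (sub_nonneg.mpr hτ₁)) (sub_nonneg.mpr hsq)]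

lemma mul_bracket_le_bracket_smul_left (hxy : ‖x‖ * ‖y‖ ≤ 1) (hτ₀ : 0 ≤ τ) (hτ₁ : τ ≤ 1) :
    τ * bracket x y ≤ bracket (τ • x) y := by
  refine (pow_le_pow_iff_left₀ (by have := bracket_nonneg x y; positivity)
    (bracket_nonneg _ _) two_ne_zero).1 ?_
  have hinner : ⟪x, y⟫ ≤ 1 := (real_inner_le_norm x y).trans hxy
  -- `[τx, y]² - τ² [x, y]² = (1 - τ) (1 + τ - 2 τ x·y)`
  rw [mul_pow, sq_bracket, sq_bracket_smul_left]
  nlinarith [mul_nonneg (sub_nonneg.mpr hτ₁) (by nlinarith : 0 ≤ 1 + τ - 2 * τ * ⟪x, y⟫)]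

lemma one_sub_add_bracket_le_four_mul_bracket_smul_left (hxy : ‖x‖ * ‖y‖ ≤ 1) (hτ₀ : 0 ≤ τ)
    (hτ₁ : τ ≤ 1) : 1 - τ + bracket x y ≤ 4 * bracket (τ • x) y := by
  have h₁ := one_sub_le_bracket_smul_left hxy hτ₀ hτ₁
  have h₂ := mul_bracket_le_bracket_smul_left hxy hτ₀ hτ₁
  have h₃ := mul_le_mul_of_nonneg_left (bracket_le_two hxy) (sub_nonneg.mpr hτ₁)
  linarith

lemma div_bracket_smul_left_rpow_le (hxy : ‖x‖ * ‖y‖ < 1) (hτ₀ : 0 ≤ τ) (hτ₁ : τ ≤ 1)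
    {w p : ℝ} (hw : 0 ≤ w) (hp : 0 ≤ p) :
    w / bracket (τ • x) y ^ p ≤ 4 ^ p * (w / (1 - τ + bracket x y) ^ p) := by
  have hpos : 0 < 1 - τ + bracket x y := by linarith [bracket_pos hxy]
  have hle := one_sub_add_bracket_le_four_mul_bracket_smul_left hxy.le hτ₀ hτ₁
  calc w / bracket (τ • x) y ^ p ≤ w / ((1 - τ + bracket x y) / 4) ^ p :=
        div_le_div_of_nonneg_left hw (by positivity) (by gcongr; linarith)
    _ = 4 ^ p * (w / (1 - τ + bracket x y) ^ p) := by
        rw [Real.div_rpow hpos.le zero_le_four]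
        field_simp

end Bracket

section Integrals

lemma setLIntegral_Ioc_comp_one_sub (f : ℝ → ENNReal) :
    ∫⁻ τ in Ioc (0 : ℝ) 1, f (1 - τ) = ∫⁻ u in Ico (0 : ℝ) 1, f u := by
  have hemb : MeasurableEmbedding fun τ : ℝ => 1 - τ :=
    (Homeomorph.subLeft (1 : ℝ)).measurableEmbedding
  rw [(Measure.measurePreserving_sub_left volume (1 : ℝ)).setLIntegral_comp_emb hemb,
    image_const_sub_Ioc, sub_self, sub_zero]

variable {b c r : ℝ}

lemma lintegral_Ioc_rpow_div_add_rpow_le (hb : -1 < b) (hc : 0 ≤ c) (hr : 0 < r) :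
    ∫⁻ u in Ioc 0 r, ENNReal.ofReal (u ^ b / (u + r) ^ (1 + b + c)) ≤
      ENNReal.ofReal (1 / ((b + 1) * r ^ c)) := by
  have hp : 0 ≤ 1 + b + c := by linarith
  have hint : IntegrableOn (fun u : ℝ => u ^ b / r ^ (1 + b + c)) (Ioc 0 r) :=
    (intervalIntegrable_iff_integrableOn_Ioc_of_le hr.le).1
      ((intervalIntegral.intervalIntegrable_rpow' hb).div_const _)
  have hnonneg : 0 ≤ᵐ[volume.restrict (Ioc 0 r)] fun u : ℝ => u ^ b / r ^ (1 + b + c) :=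
    ae_restrict_of_forall_mem measurableSet_Ioc fun u hu => by
      have := Real.rpow_nonneg hu.1.le b; positivity
  calc ∫⁻ u in Ioc 0 r, ENNReal.ofReal (u ^ b / (u + r) ^ (1 + b + c))
      ≤ ∫⁻ u in Ioc 0 r, ENNReal.ofReal (u ^ b / r ^ (1 + b + c)) :=
        setLIntegral_mono (by fun_prop) fun u hu => ENNReal.ofReal_le_ofReal <|
          div_le_div_of_nonneg_left (Real.rpow_nonneg hu.1.le b) (by positivity)
            (Real.rpow_le_rpow hr.le (by linarith [hu.1]) hp)
    _ = ENNReal.ofReal (∫ u in Ioc 0 r, u ^ b / r ^ (1 + b + c)) :=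
        (ofReal_integral_eq_lintegral_ofReal hint hnonneg).symm
    _ = ENNReal.ofReal (1 / ((b + 1) * r ^ c)) := by
        rw [integral_div, ← intervalIntegral.integral_of_le hr.le, integral_rpow (Or.inl hb),
          Real.zero_rpow (by linarith), sub_zero, show 1 + b + c = (b + 1) + c by ring, Real.rpow_add hr (b + 1) c]
        field_simp

lemma lintegral_Ioi_rpow_div_add_rpow_le (hb : -1 < b) (hc : 0 < c) (hr : 0 < r) :
    ∫⁻ u in Ioi r, ENNReal.ofReal (u ^ b / (u + r) ^ (1 + b + c)) ≤
      ENNReal.ofReal (1 / (c * r ^ c)) := by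
  have hint : IntegrableOn (fun u : ℝ => u ^ (-1 - c)) (Ioi r) :=
    integrableOn_Ioi_rpow_of_lt (by linarith) hr
  have hnonneg : 0 ≤ᵐ[volume.restrict (Ioi r)] fun u : ℝ => u ^ (-1 - c) :=
    ae_restrict_of_forall_mem measurableSet_Ioi fun u hu => Real.rpow_nonneg (hr.trans hu).le _
  calc ∫⁻ u in Ioi r, ENNReal.ofReal (u ^ b / (u + r) ^ (1 + b + c))
      ≤ ∫⁻ u in Ioi r, ENNReal.ofReal (u ^ (-1 - c)) := by
        refine setLIntegral_mono (by fun_prop) fun u hu => ENNReal.ofReal_le_ofReal ?_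
        have hu : 0 < u := hr.trans hu
        calc u ^ b / (u + r) ^ (1 + b + c) ≤ u ^ b / u ^ (1 + b + c) :=
              div_le_div_of_nonneg_left (Real.rpow_nonneg hu.le b) (by positivity)
                (Real.rpow_le_rpow hu.le (by linarith) (by linarith))
          _ = u ^ (-1 - c) := by rw [← Real.rpow_sub hu]; ring_nf
    _ = ENNReal.ofReal (∫ u in Ioi r, u ^ (-1 - c)) :=
        (ofReal_integral_eq_lintegral_ofReal hint hnonneg).symm
    _ = ENNReal.ofReal (1 / (c * r ^ c)) := by
        rw [integral_Ioi_rpow_of_lt (by linarith) hr, show -1 - c + 1 = -c by ring,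
          Real.rpow_neg hr.le]
        field_simp

lemma lintegral_Ioi_zero_rpow_div_add_rpow_le (hb : -1 < b) (hc : 0 < c) (hr : 0 < r) :
    ∫⁻ u in Ioi 0, ENNReal.ofReal (u ^ b / (u + r) ^ (1 + b + c)) ≤
      ENNReal.ofReal ((1 / (b + 1) + 1 / c) / r ^ c) := by
  rw [← Ioc_union_Ioi_eq_Ioi hr.le]
  refine (lintegral_union_le _ _ _).trans ?_
  refine (add_le_add (lintegral_Ioc_rpow_div_add_rpow_le hb hc.le hr)
    (lintegral_Ioi_rpow_div_add_rpow_le hb hc hr)).trans_eq ?_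
  have : 0 < b + 1 := by linarith
  rw [← ENNReal.ofReal_add (by positivity) (by positivity)]
  congr 1
  field_simp

end Integrals

theorem integral_estimate_dilation_general (n : ℕ) (b c : ℝ)
    (hb : -1 < b) (hc : 0 < c) :
    ∃ C : ℝ, 0 < C ∧ ∀ x ∈ ball (0 : EuclideanSpace ℝ (Fin n)) 1,
      ∀ y ∈ ball (0 : EuclideanSpace ℝ (Fin n)) 1,
        (∫⁻ τ in Set.Ioc (0 : ℝ) 1,
            ENNReal.ofReal ((1 - τ) ^ b / bracket (τ • x) y ^ (1 + b + c))) ≤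
          ENNReal.ofReal (C / bracket x y ^ c) := by
  have hb₁ : 0 < b + 1 := by linarith
  refine ⟨4 ^ (1 + b + c) * (1 / (b + 1) + 1 / c), by positivity, fun x hx y hy => ?_⟩
  rw [mem_ball_zero_iff] at hx hy
  have hxy : ‖x‖ * ‖y‖ < 1 := mul_lt_one_of_nonneg_of_lt_one_left (norm_nonneg x) hx hy.le
  set f : ℝ → ENNReal := fun u => ENNReal.ofReal (u ^ b / (u + bracket x y) ^ (1 + b + c))
  calc ∫⁻ τ in Ioc 0 1, ENNReal.ofReal ((1 - τ) ^ b / bracket (τ • x) y ^ (1 + b + c))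
      ≤ ∫⁻ τ in Ioc 0 1, ENNReal.ofReal (4 ^ (1 + b + c)) * f (1 - τ) := by
        refine setLIntegral_mono (by fun_prop) fun τ hτ => ?_
        exact (ENNReal.ofReal_le_ofReal (div_bracket_smul_left_rpow_le hxy hτ.1.le hτ.2
          (Real.rpow_nonneg (sub_nonneg.mpr hτ.2) b) (by linarith))).trans_eq
          (ENNReal.ofReal_mul (by positivity))
    _ = ENNReal.ofReal (4 ^ (1 + b + c)) * ∫⁻ u in Ico 0 1, f u := by
        rw [lintegral_const_mul' _ _ ENNReal.ofReal_ne_top, setLIntegral_Ioc_comp_one_sub]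
    _ ≤ ENNReal.ofReal (4 ^ (1 + b + c)) * ∫⁻ u in Ioi 0, f u := by
        rw [setLIntegral_congr Ioi_ae_eq_Ici]
        gcongr
        exact Ico_subset_Ici_self
    _ ≤ ENNReal.ofReal (4 ^ (1 + b + c)) *
          ENNReal.ofReal ((1 / (b + 1) + 1 / c) / bracket x y ^ c) := by
        gcongr
        exact lintegral_Ioi_zero_rpow_div_add_rpow_le hb hc (bracket_pos hxy)
    _ = ENNReal.ofReal (4 ^ (1 + b + c) * (1 / (b + 1) + 1 / c) / bracket x y ^ c) := by
        rw [← ENNReal.ofReal_mul (by positivity), mul_div_assoc]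

theorem integral_estimate_dilation (n : ℕ) (hn : 2 ≤ n) (b c : ℝ)
    (hb : -1 < b) (hc : 0 < c) :
    ∃ C : ℝ, 0 < C ∧ ∀ x ∈ ball (0 : EuclideanSpace ℝ (Fin n)) 1,
      ∀ y ∈ ball (0 : EuclideanSpace ℝ (Fin n)) 1,
        (∫⁻ τ in Set.Ioc (0 : ℝ) 1,
            ENNReal.ofReal ((1 - τ) ^ b / bracket (τ • x) y ^ (1 + b + c))) ≤
          ENNReal.ofReal (C / bracket x y ^ c) :=
  integral_estimate_dilation_general n b c hb hc
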